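/- arXiv:math/0503606 — 5 statements merged into one kernel-verified Lean document; each statement's English description precedes it below -/
import Mathlib

section
/- If a nondegenerate rational quadratic form 𝔮 : ℝⁿ → ℝ satisfies that the quadric {𝔮 = 1} contains no rational point, then for any decreasing approximating function ψ with lim_{x→∞} x·ψ(x) = 0, the set S_ψ of points x̄ on the quadric for which ‖q·x̄ − p̄‖ ≤ ψ(q) has infinitely many solutions (q, p̄) ∈ ℕ × ℤⁿ is empty. -/
open Filter

lemma aux_int_mul (m : ℕ) (q : ℚ) (h : q.den ∣ m) : ∃ z : ℤ, (m : ℚ) * q = z := by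
  obtain ⟨k, hk⟩ := h
  refine ⟨(k : ℤ) * q.num, ?_⟩
  rw [hk]
  push_cast
  rw [mul_comm (q.den : ℚ) (k : ℚ), mul_assoc, Rat.den_mul_eq_num]


set_option maxHeartbeats 1600000 in
/-- If a nondegenerate rational quadratic form 𝔮 (symmetric rational matrix `M`
with nonzero determinant) has no rational point on the quadric `𝔮 = 1`, then for any decreasing
approximating function ψ with x·ψ(x) → 0, the set of points `x` on the quadric such that
`‖q•x − p‖ ≤ ψ(q)` for infinitely many `(q, p) ∈ ℕ × ℤⁿ` is empty (max-norm). -/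
theorem stmt_1 (n : ℕ) (ψ : ℝ → ℝ) (hψ0 : ∀ x, 0 ≤ ψ x)
    (hψanti : AntitoneOn ψ (Set.Ici (0 : ℝ)))
    (hψlim : Tendsto (fun x : ℝ => x * ψ x) atTop (nhds 0))
    (M : Matrix (Fin n) (Fin n) ℚ) (hM : M.IsSymm) (hMdet : M.det ≠ 0)
    (hnoq : ∀ x : Fin n → ℚ, (∑ i, ∑ j, M i j * x i * x j) ≠ 1) :
    {x : Fin n → ℝ | (∑ i, ∑ j, (M i j : ℝ) * x i * x j) = 1 ∧
      {qp : ℕ × (Fin n → ℤ) | 0 < qp.1 ∧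
        ‖(qp.1 : ℝ) • x - (fun i => (qp.2 i : ℝ))‖ ≤ ψ qp.1}.Infinite} = ∅ := by
  ext x
  simp only [Set.mem_setOf_eq, Set.mem_empty_iff_false, iff_false, not_and]
  intro hx hinf
  set S := {qp : ℕ × (Fin n → ℤ) | 0 < qp.1 ∧
      ‖(qp.1 : ℝ) • x - (fun i => (qp.2 i : ℝ))‖ ≤ ψ qp.1} with hSdef
  -- common denominator
  set d : ℕ := ∏ i, ∏ j, (M i j).den with hddef
  have hdpos : 0 < d :=
    Finset.prod_pos fun i _ => Finset.prod_pos fun j _ => (M i j).pos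
  have hdvd : ∀ i j, (M i j).den ∣ d := by
    intro i j
    have ha : (M i j).den ∣ ∏ j, (M i j).den :=
      Finset.dvd_prod_of_mem (fun j => (M i j).den) (Finset.mem_univ j)
    have hb : (∏ j, (M i j).den) ∣ d := by
      rw [hddef]
      exact Finset.dvd_prod_of_mem (fun i => ∏ j, (M i j).den) (Finset.mem_univ i)
    exact ha.trans hb
  have hint : ∀ i j, ∃ z : ℤ, (d : ℚ) * M i j = z := fun i j =>
    aux_int_mul d (M i j) (hdvd i j)
  choose z hz using hint
  -- constants
  set X : ℝ := ‖x‖ with hXdef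
  have hX0 : 0 ≤ X := norm_nonneg x
  set A : ℝ := ∑ i, ∑ j, |(M i j : ℝ)| with hAdef
  have hA0 : 0 ≤ A :=
    Finset.sum_nonneg fun i _ => Finset.sum_nonneg fun j _ => abs_nonneg _
  set C : ℝ := (d : ℝ) * A * (2 * X + 1) with hCdef
  have hC0 : 0 ≤ C := by positivity
  set ε₀ : ℝ := 1 / (C + 1) with hε₀def
  have hε₀pos : 0 < ε₀ := by positivity
  -- eventually small
  have hev : ∀ᶠ t in atTop, |t * ψ t| < ε₀ := by
    have hmem : Set.Ioo (-ε₀) ε₀ ∈ nhds (0 : ℝ) :=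
      Ioo_mem_nhds (by linarith) hε₀pos
    filter_upwards [hψlim hmem] with t ht
    rw [abs_lt]; exact ⟨ht.1, ht.2⟩
  obtain ⟨x₀, hx₀⟩ := eventually_atTop.mp hev
  set B : ℕ := ⌈x₀⌉₊ with hBdef
  -- finiteness of small-q pairs
  have hfin : (S ∩ {qp : ℕ × (Fin n → ℤ) | qp.1 ≤ B}).Finite := by
    set K : ℤ := ⌈(B : ℝ) * X + ψ 0⌉ with hKdef
    apply Set.Finite.subset
      (((Set.finite_Icc (0 : ℕ) B)).prod
        (Set.finite_Icc (fun _ => -K : Fin n → ℤ) (fun _ => K)))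
    rintro ⟨q, p⟩ ⟨⟨hq0, hqx⟩, hqB⟩
    have hcomp : ∀ i, |(q : ℝ) * x i - (p i : ℝ)| ≤ ψ q := by
      intro i
      have h := norm_le_pi_norm ((q : ℝ) • x - fun i => (p i : ℝ)) i
      simp only [Pi.sub_apply, Pi.smul_apply, smul_eq_mul, Real.norm_eq_abs] at h
      exact h.trans hqx
    have hψle : ψ (q : ℝ) ≤ ψ 0 :=
      hψanti Set.self_mem_Ici (Set.mem_Ici.mpr (Nat.cast_nonneg q)) (Nat.cast_nonneg q)
    have hpK : ∀ i, |p i| ≤ K := by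
      intro i
      have hx1 : |x i| ≤ X := by
        have := norm_le_pi_norm x i; simpa using this
      have ha : |(p i : ℝ)| - |(q : ℝ) * x i| ≤ |(q : ℝ) * x i - (p i : ℝ)| := by
        have := abs_sub_abs_le_abs_sub ((p i : ℝ)) ((q : ℝ) * x i)
        rw [abs_sub_comm] at this
        linarith
      have hqB' : (q : ℝ) ≤ (B : ℝ) := by exact_mod_cast hqB
      have hb : |(q : ℝ) * x i| ≤ (B : ℝ) * X := by
        rw [abs_mul, abs_of_nonneg (Nat.cast_nonneg q)]
        exact mul_le_mul hqB' hx1 (abs_nonneg _) (Nat.cast_nonneg B)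
      have hc : |(p i : ℝ)| ≤ (B : ℝ) * X + ψ 0 := by
        have := hcomp i; linarith
      have hd : |(p i : ℝ)| ≤ (K : ℝ) := hc.trans (Int.le_ceil _)
      have : ((|p i| : ℤ) : ℝ) ≤ (K : ℝ) := by push_cast; exact hd
      exact_mod_cast this
    refine Set.mem_prod.mpr ⟨Set.mem_Icc.mpr ⟨Nat.zero_le q, hqB⟩,
      Set.mem_Icc.mpr ⟨fun i => ?_, fun i => ?_⟩⟩
    · exact neg_le_of_abs_le (hpK i)
    · exact le_of_abs_le (hpK i)
  obtain ⟨⟨q, p⟩, hqpS, hqpT⟩ := (hinf.diff hfin).nonempty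
  have hqS : (q, p) ∈ S := hqpS
  have hqB : B < q := by
    by_contra h
    exact hqpT ⟨hqS, le_of_not_gt h⟩
  obtain ⟨hq0, hqx⟩ := hqS
  have hq0' : (0 : ℝ) < (q : ℝ) := by exact_mod_cast hq0
  have hq1 : (1 : ℝ) ≤ (q : ℝ) := by exact_mod_cast hq0
  -- q is large
  have hqlarge : x₀ ≤ (q : ℝ) := le_trans (Nat.le_ceil x₀) (by exact_mod_cast hqB.le)
  have hsmall : |(q : ℝ) * ψ q| < ε₀ := hx₀ q hqlarge
  have hψq0 : 0 ≤ ψ q := hψ0 _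
  have hψq1 : ψ (q : ℝ) ≤ 1 := by
    have h1 : ψ (q : ℝ) ≤ (q : ℝ) * ψ q := le_mul_of_one_le_left hψq0 hq1
    have h2 : (q : ℝ) * ψ q < ε₀ := lt_of_abs_lt hsmall
    have h3 : ε₀ ≤ 1 := by
      rw [hε₀def, div_le_one (by linarith)]; linarith
    linarith
  -- componentwise approximation
  have hcomp : ∀ i, |(q : ℝ) * x i - (p i : ℝ)| ≤ ψ q := by
    intro i
    have := norm_le_pi_norm ((q : ℝ) • x - fun i => (p i : ℝ)) i
    simp only [Pi.sub_apply, Pi.smul_apply, smul_eq_mul, Real.norm_eq_abs] at this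
    exact this.trans hqx
  -- the rational value
  set r : ℚ := ∑ i, ∑ j, M i j * ((p i : ℚ) / q) * ((p j : ℚ) / q) with hrdef
  have hr1 : r ≠ 1 := hnoq _
  -- integrality : d * q^2 * r is an integer
  set N : ℤ := ∑ i, ∑ j, z i j * p i * p j with hNdef
  have hqQ : ((q : ℚ)) ≠ 0 := by exact_mod_cast hq0.ne'
  have h1 : (d : ℚ) * (q : ℚ) ^ 2 * r = (N : ℚ) := by
    rw [hrdef, hNdef]
    push_cast
    rw [Finset.mul_sum]
    apply Finset.sum_congr rfl
    intro i _
    rw [Finset.mul_sum]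
    apply Finset.sum_congr rfl
    intro j _
    have hzij := hz i j
    field_simp
    linear_combination ((p i : ℚ) * (p j : ℚ)) * hzij
  -- lower bound
  have h2 : (1 : ℚ) ≤ (d : ℚ) * (q : ℚ) ^ 2 * |r - 1| := by
    have hint2 : (d : ℚ) * (q : ℚ) ^ 2 * (r - 1) = ((N - (d : ℤ) * (q : ℤ) ^ 2 : ℤ) : ℚ) := by
      push_cast
      rw [mul_sub, h1]
      ring
    have hdq0 : ((d : ℚ) * (q : ℚ) ^ 2) ≠ 0 := by positivity
    have hne : (N - (d : ℤ) * (q : ℤ) ^ 2) ≠ 0 := by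
      intro h
      apply hr1
      have h0 : (d : ℚ) * (q : ℚ) ^ 2 * (r - 1) = 0 := by
        rw [hint2, h]; simp
      rcases mul_eq_zero.mp h0 with h' | h'
      · exact absurd h' hdq0
      · linarith [sub_eq_zero.mp h']
    have habs : (1 : ℚ) ≤ |((N - (d : ℤ) * (q : ℤ) ^ 2 : ℤ) : ℚ)| := by
      rw [← Int.cast_abs]
      exact_mod_cast Int.one_le_abs hne
    rw [← hint2, abs_mul, abs_of_nonneg (by positivity : (0:ℚ) ≤ (d : ℚ) * (q : ℚ) ^ 2)] at habs
    exact habs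
  -- real cast of lower bound
  have h2' : (1 : ℝ) ≤ (d : ℝ) * (q : ℝ) ^ 2 * |(r : ℝ) - 1| := by
    have := (Rat.cast_le (K := ℝ)).mpr h2
    push_cast at this
    convert this using 3 <;> push_cast <;> ring
  -- upper bound
  have h3 : |(r : ℝ) - 1| ≤ A * (2 * X + 1) * (ψ q / q) := by
    set ε : ℝ := ψ q / q with hεdef
    have hε0 : 0 ≤ ε := by positivity
    have hε1 : ε ≤ 1 := by
      rw [hεdef, div_le_one hq0']; linarith
    set y : Fin n → ℝ := fun i => (p i : ℝ) / q with hydef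
    have hyx : ∀ i, |y i - x i| ≤ ε := by
      intro i
      have heq : y i - x i = -(((q : ℝ) * x i - (p i : ℝ))) / q := by
        rw [hydef]; field_simp; ring
      rw [heq, abs_div, abs_neg, abs_of_pos hq0', hεdef]
      exact (div_le_div_iff_of_pos_right hq0').mpr (hcomp i)
    have hxX : ∀ i, |x i| ≤ X := fun i => by
      have := norm_le_pi_norm x i; simpa using this
    have hyX : ∀ i, |y i| ≤ X + 1 := fun i => by
      have h := abs_sub_abs_le_abs_sub (y i) (x i)
      linarith [hyx i, hxX i]
    have hterm : ∀ i j, |y i * y j - x i * x j| ≤ (2 * X + 1) * ε := by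
      intro i j
      have heq : y i * y j - x i * x j = y i * (y j - x j) + x j * (y i - x i) := by ring
      rw [heq]
      calc |y i * (y j - x j) + x j * (y i - x i)|
          ≤ |y i * (y j - x j)| + |x j * (y i - x i)| := abs_add_le _ _
        _ = |y i| * |y j - x j| + |x j| * |y i - x i| := by rw [abs_mul, abs_mul]
        _ ≤ (X + 1) * ε + X * ε :=
            add_le_add
              (mul_le_mul (hyX i) (hyx j) (abs_nonneg _) (by linarith))
              (mul_le_mul (hxX j) (hyx i) (abs_nonneg _) hX0)
        _ = (2 * X + 1) * ε := by ring
    have hrr : ((r : ℝ)) = ∑ i, ∑ j, (M i j : ℝ) * y i * y j := by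
      rw [hrdef]
      push_cast
      simp only [hydef]
    have hdiff : (r : ℝ) - 1 = ∑ i, ∑ j, (M i j : ℝ) * (y i * y j - x i * x j) := by
      rw [hrr, ← hx, ← Finset.sum_sub_distrib]
      apply Finset.sum_congr rfl
      intro i _
      rw [← Finset.sum_sub_distrib]
      apply Finset.sum_congr rfl
      intro j _
      ring
    rw [hdiff]
    calc |∑ i, ∑ j, (M i j : ℝ) * (y i * y j - x i * x j)|
        ≤ ∑ i, ∑ j, |(M i j : ℝ) * (y i * y j - x i * x j)| := by
          apply (Finset.abs_sum_le_sum_abs _ _).trans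
          exact Finset.sum_le_sum fun i _ => Finset.abs_sum_le_sum_abs _ _
      _ ≤ ∑ i, ∑ j, |(M i j : ℝ)| * ((2 * X + 1) * ε) := by
          refine Finset.sum_le_sum fun i _ => Finset.sum_le_sum fun j _ => ?_
          rw [abs_mul]
          exact mul_le_mul_of_nonneg_left (hterm i j) (abs_nonneg _)
      _ = A * ((2 * X + 1) * ε) := by
          rw [hAdef, Finset.sum_mul]
          exact Finset.sum_congr rfl fun i _ => by rw [Finset.sum_mul]
      _ = A * (2 * X + 1) * ε := by ring
  -- contradiction
  have h4 : (1 : ℝ) ≤ C * ((q : ℝ) * ψ q) := by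
    have := h2'.trans (by
      have := mul_le_mul_of_nonneg_left h3 (by positivity : (0:ℝ) ≤ (d : ℝ) * (q : ℝ) ^ 2)
      exact this)
    calc (1 : ℝ) ≤ (d : ℝ) * (q : ℝ) ^ 2 * (A * (2 * X + 1) * (ψ q / q)) := this
      _ = C * ((q : ℝ) * ψ q) := by rw [hCdef]; field_simp
  have h5 : (q : ℝ) * ψ q < ε₀ := lt_of_abs_lt hsmall
  have h6 : ε₀ * (C + 1) = 1 := by rw [hε₀def]; field_simp
  nlinarith [mul_le_mul_of_nonneg_left h5.le hC0, mul_nonneg (mul_nonneg hq0'.le hψq0) hC0]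
end

section
/- Let pr : TSⁿ → ℝⁿ be the stereographic projection from the point 2e_{n+1} of the sphere TSⁿ of center e_{n+1} and radius 1 in ℝ^{n+1}, given by pr(x̄) = (2/(2−x_{n+1}))·x̄ − (2x_{n+1}/(2−x_{n+1}))·e_{n+1}. Then for every α > 0 and every ε > 0, pr maps the set of simultaneously α-very well approximable vectors on TSⁿ into the set of simultaneously (α−ε)-very well approximable vectors in ℝⁿ; i.e. pr(S_α(TSⁿ)) ⊆ S_{α−ε}(ℝⁿ). -/
open Filter

/-- The set `S_α(M)` of simultaneously α-very well approximable vectors lying in `M ⊆ ℝ^m`: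
points `x ∈ M` with `‖q•x − p‖ ≤ q^{−α}` for infinitely many `(q, p) ∈ ℕ × ℤ^m` (max-norm). -/
noncomputable def SAlpha (m : ℕ) (α : ℝ) (M : Set (Fin m → ℝ)) : Set (Fin m → ℝ) :=
  {x | x ∈ M ∧ {qp : ℕ × (Fin m → ℤ) | 0 < qp.1 ∧
      ‖(qp.1 : ℝ) • x - (fun i => (qp.2 i : ℝ))‖ ≤ (qp.1 : ℝ) ^ (-α)}.Infinite}

/-- The sphere `TSⁿ` of center `e_{n+1}` and radius 1 in `ℝ^{n+1}` (Euclidean). -/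
def TSphere (n : ℕ) : Set (Fin (n + 1) → ℝ) :=
  {x | ∑ i, (x i - if i = Fin.last n then 1 else 0) ^ 2 = 1}

lemma fiber_finite (m : ℕ) (x : Fin m → ℝ) (q : ℕ) (c : ℝ) :
    {p : Fin m → ℤ | ‖(q : ℝ) • x - (fun i => (p i : ℝ))‖ ≤ c}.Finite := by
  apply Set.Finite.subset
    (Set.Finite.pi (fun i => Set.finite_Icc (⌈(q:ℝ) * x i - c⌉) (⌊(q:ℝ) * x i + c⌋)))
  intro p hp
  simp only [Set.mem_pi, Set.mem_univ, Set.mem_Icc, forall_true_left]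
  intro i
  have h1 : ‖((q : ℝ) • x - fun i => (p i : ℝ)) i‖ ≤ c :=
    le_trans (norm_le_pi_norm _ i) hp
  simp only [Pi.sub_apply, Pi.smul_apply, smul_eq_mul, Real.norm_eq_abs] at h1
  rw [abs_le] at h1
  constructor
  · rw [Int.ceil_le]; linarith [h1.2]
  · rw [Int.le_floor]; linarith [h1.1]

lemma unbounded_of_infinite {X : Type*} (S : Set (ℕ × X)) (hS : S.Infinite)
    (hfib : ∀ q, {p | (q, p) ∈ S}.Finite) (B : ℕ) : ∃ qp ∈ S, B ≤ qp.1 := by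
  by_contra hcon
  push_neg at hcon
  apply hS
  apply Set.Finite.subset
    (Set.Finite.biUnion (Set.finite_Iio B) (fun q _ => (hfib q).image (Prod.mk q)))
  rintro ⟨q, p⟩ hqp
  exact Set.mem_biUnion (hcon _ hqp) ⟨p, hqp, rfl⟩

lemma infinite_of_unbounded {X : Type*} (S : Set (ℕ × X))
    (h : ∀ B, ∃ qp ∈ S, B ≤ qp.1) : S.Infinite := by
  intro hfin
  obtain ⟨B, hB⟩ := (hfin.image (f := Prod.fst)).bddAbove
  obtain ⟨qp, hqp, hge⟩ := h (B + 1)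
  have := hB (Set.mem_image_of_mem _ hqp)
  omega


/-- the stereographic projection `pr` from `2e_{n+1}`,
`pr(x) i = 2 x_i / (2 − x_{n+1})`, maps `S_α(TSⁿ)` (minus the projection point) into
`S_{α−ε}(ℝⁿ)` for every `α > 0` and `ε > 0`. -/
theorem stmt_2 (n : ℕ) (α ε : ℝ) (hα : 0 < α) (hε : 0 < ε)
    (x : Fin (n + 1) → ℝ) (hx2 : x (Fin.last n) ≠ 2)
    (hx : x ∈ SAlpha (n + 1) α (TSphere n)) :
    (fun i : Fin n => 2 * x i.castSucc / (2 - x (Fin.last n))) ∈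
      SAlpha n (α - ε) Set.univ := by
  obtain ⟨hxs, hinf⟩ := hx
  set L := Fin.last n with hL
  set δ : ℝ := 2 - x L with hδdef
  -- sphere bounds
  have hsum : ∑ i, (x i - if i = L then 1 else 0) ^ 2 = 1 := hxs
  have hb : ∀ j, |x j - if j = L then 1 else 0| ≤ 1 := by
    intro j
    have h1 : (x j - if j = L then 1 else 0) ^ 2 ≤ 1 := by
      exact (Finset.single_le_sum (f := fun i => (x i - if i = L then 1 else 0) ^ 2)
        (fun i _ => sq_nonneg _) (Finset.mem_univ j)).trans hsum.le
    exact (sq_le_one_iff_abs_le_one _).mp h1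
  have hbL : |x L - 1| ≤ 1 := by simpa using hb L
  have hδpos : 0 < δ := by
    rcases (abs_le.mp hbL) with ⟨_, h2⟩
    have : x L ≤ 2 := by linarith
    have : δ ≠ 0 := by simp [hδdef]; intro h; exact hx2 (by linarith)
    cases lt_or_eq_of_le (by linarith : (0:ℝ) ≤ δ) with
    | inl h => exact h
    | inr h => exact absurd h.symm this
  have hxb : ∀ j, |x j| ≤ 2 := by
    intro j
    have := hb j
    rcases abs_le.mp this with ⟨h1, h2⟩
    rw [abs_le]
    constructor <;> [skip; skip] <;> split_ifs at h1 h2 <;> linarith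
  refine ⟨Set.mem_univ _, ?_⟩
  apply infinite_of_unbounded
  intro B
  -- choose threshold N
  have h1t : Tendsto (fun q : ℕ => δ * q - 1) atTop atTop := by
    apply tendsto_atTop_add_const_right
    exact (tendsto_natCast_atTop_atTop (R := ℝ)).const_mul_atTop hδpos
  have h2t : Tendsto (fun q : ℕ => (δ * q - 1) ^ ε) atTop atTop :=
    (tendsto_rpow_atTop hε).comp h1t
  obtain ⟨N, hN⟩ := (((h1t.eventually_ge_atTop 1).and
    ((h2t.eventually_ge_atTop (12 / δ * 5 ^ α)).and
      (h1t.eventually_ge_atTop B))).and (eventually_ge_atTop 1)).exists_forall_of_atTop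
  -- extract a good (q,p) with q ≥ N
  obtain ⟨⟨q, p⟩, hqpS, hqN⟩ := unbounded_of_infinite _ hinf
    (fun q => (fiber_finite (n+1) x q ((q:ℝ) ^ (-α))).subset (fun p hp => hp.2)) N
  obtain ⟨hq0, hnorm⟩ := hqpS
  obtain ⟨⟨h1q, hKq, hBq⟩, -⟩ := hN q hqN
  set e : ℝ := (q:ℝ) ^ (-α) with he
  have hq1' : (1:ℝ) ≤ q := by exact_mod_cast hq0
  have hepos : 0 < e := Real.rpow_pos_of_pos (by linarith) _
  have he1 : e ≤ 1 := Real.rpow_le_one_of_one_le_of_nonpos hq1' (by linarith)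
  have hco : ∀ j, |(q:ℝ) * x j - p j| ≤ e := by
    intro j
    have h1 := le_trans (norm_le_pi_norm ((q:ℝ) • x - fun i => (p i:ℝ)) j) hnorm
    simpa [Real.norm_eq_abs] using h1
  have hxLδ : (q:ℝ) * x L = 2*q - δ*q := by rw [hδdef]; ring
  set Qr : ℝ := 2 * q - p L with hQrdef
  have hQr_lb : δ * q - 1 ≤ Qr := by
    have h := abs_le.mp (hco L)
    rw [hQrdef]; linarith [h.1, h.2]
  have hQr_ub : Qr ≤ 5 * q := by
    have h := abs_le.mp (hco L)
    have hxL := abs_le.mp (hxb L)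
    have : -2*(q:ℝ) ≤ q * x L := by nlinarith [hxL.1]
    rw [hQrdef]; linarith [h.1, h.2]
  have hQr1 : 1 ≤ Qr := le_trans h1q hQr_lb
  have hQrpos : 0 < Qr := by linarith
  have hZr : ((2 * (q:ℤ) - p L : ℤ) : ℝ) = Qr := by rw [hQrdef]; push_cast; ring
  have h0 : (0:ℤ) ≤ 2 * (q:ℤ) - p L := by
    have : (0:ℝ) < ((2 * (q:ℤ) - p L : ℤ) : ℝ) := hZr ▸ hQrpos
    exact_mod_cast this.le
  set Q : ℕ := (2 * (q:ℤ) - p L).toNat with hQ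
  have hQr_eq : (Q:ℝ) = Qr := by
    rw [← hZr, hQ]
    exact_mod_cast congrArg (Int.cast : ℤ → ℝ) (Int.toNat_of_nonneg h0)
  have hQpos : 0 < Q := by
    have : (0:ℝ) < (Q:ℝ) := hQr_eq ▸ hQrpos
    exact_mod_cast this
  refine ⟨(Q, fun i => 2 * p i.castSucc), ⟨hQpos, ?_⟩, ?_⟩
  · -- the norm bound
    rw [pi_norm_le_iff_of_nonneg (Real.rpow_nonneg (by positivity) _)]
    intro i
    simp only [Pi.sub_apply, Pi.smul_apply, smul_eq_mul, Real.norm_eq_abs]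
    push_cast
    set A : ℝ := (q:ℝ) * x i.castSucc - p i.castSucc with hA
    set Bv : ℝ := (p L:ℝ) - q * x L with hBv
    have hAe : |A| ≤ e := hco i.castSucc
    have hBe : |Bv| ≤ e := by rw [hBv, abs_sub_comm]; exact hco L
    have hxi : |x i.castSucc| ≤ 2 := hxb i.castSucc
    have hxL : |x L| ≤ 2 := hxb L
    have hiden : (Q:ℝ) * (2 * x i.castSucc / δ) - 2 * (p i.castSucc:ℝ)
        = (2/δ) * (2*A - Bv * x i.castSucc - x L * A) := by
      rw [hQr_eq, hQrdef, hA, hBv, hδdef]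
      field_simp
      ring
    have h6 : |2*A - Bv * x i.castSucc - x L * A| ≤ 6 * e := by
      have t1 : |2*A| ≤ 2*e := by rw [abs_mul]; simp; linarith [abs_nonneg A, hAe]
      have t2 : |Bv * x i.castSucc| ≤ e * 2 := by
        rw [abs_mul]; exact mul_le_mul hBe hxi (abs_nonneg _) hepos.le
      have t3 : |x L * A| ≤ 2 * e := by
        rw [abs_mul]; exact mul_le_mul hxL hAe (abs_nonneg _) (by norm_num)
      calc |2*A - Bv * x i.castSucc - x L * A|
          ≤ |2*A - Bv * x i.castSucc| + |x L * A| := abs_sub _ _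
        _ ≤ |2*A| + |Bv * x i.castSucc| + |x L * A| := by linarith [abs_sub (2*A) (Bv * x i.castSucc)]
        _ ≤ 6 * e := by linarith
    have habs : |(Q:ℝ) * (2 * x i.castSucc / δ) - 2 * (p i.castSucc:ℝ)| ≤ 12/δ * e := by
      rw [hiden, abs_mul, abs_of_pos (by positivity : (0:ℝ) < 2/δ)]
      calc 2/δ * |2*A - Bv * x i.castSucc - x L * A| ≤ 2/δ * (6*e) :=
            mul_le_mul_of_nonneg_left h6 (by positivity)
        _ = 12/δ * e := by ring
    have hrhs : 12/δ * e ≤ (Q:ℝ) ^ (-(α - ε)) := by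
      rw [hQr_eq]
      have h5pos : (0:ℝ) < 5 := by norm_num
      have hε1 : (δ*q - 1) ^ ε ≤ Qr ^ ε :=
        Real.rpow_le_rpow (by linarith) hQr_lb hε.le
      have hα1 : (5*(q:ℝ)) ^ (-α) ≤ Qr ^ (-α) :=
        Real.rpow_le_rpow_of_nonpos hQrpos hQr_ub (by linarith)
      have hmul : (5*(q:ℝ)) ^ (-α) = 5 ^ (-α) * (q:ℝ) ^ (-α) :=
        Real.mul_rpow (by norm_num) (by positivity)
      have h5e : (0:ℝ) < (5:ℝ) ^ (-α) := Real.rpow_pos_of_pos h5pos _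
      have step1 : 12/δ * e ≤ (δ*q - 1) ^ ε * ((5:ℝ) ^ (-α) * e) := by
        have hmm := mul_le_mul_of_nonneg_right hKq (mul_pos h5e hepos).le
        calc 12/δ * e = (12/δ * 5 ^ α) * ((5:ℝ) ^ (-α) * e) := by
              rw [Real.rpow_neg (by norm_num : (0:ℝ) ≤ 5)]
              field_simp
          _ ≤ (δ*q - 1) ^ ε * ((5:ℝ) ^ (-α) * e) := hmm
      have step2 : (δ*q - 1) ^ ε * ((5:ℝ) ^ (-α) * e) ≤ Qr ^ ε * Qr ^ (-α) := by
        apply mul_le_mul hε1 _ _ (Real.rpow_nonneg hQrpos.le _)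
        · rw [he, ← hmul]; exact hα1
        · positivity
      have step3 : Qr ^ ε * Qr ^ (-α) = Qr ^ (-(α - ε)) := by
        rw [← Real.rpow_add hQrpos]; ring_nf
      linarith [step1, step2, step3.le, step3.ge]
    exact habs.trans hrhs
  · -- B ≤ Q
    have : (B:ℝ) ≤ (Q:ℝ) := by rw [hQr_eq]; linarith
    exact_mod_cast this
end

section
/- Let inv : ℝⁿ → TSⁿ be the inverse of the stereographic projection, inv(ȳ) = (4/(4+‖ȳ‖_e²))·ȳ + (2‖ȳ‖_e²/(4+‖ȳ‖_e²))·e_{n+1}. Then for every α > 0 and every ε > 0, inv maps the set of simultaneously α-very well approximable vectors in ℝⁿ into the set of simultaneously ((α−1)/2 − ε)-very well approximable vectors on TSⁿ. -/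
open Filter

/-- The inverse of the stereographic projection:
`inv(y) = (4/(4+‖y‖²))·y + (2‖y‖²/(4+‖y‖²))·e_{n+1}`, with `‖y‖` the Euclidean norm. -/
noncomputable def invStereo (n : ℕ) (y : Fin n → ℝ) : Fin (n + 1) → ℝ :=
  Fin.snoc (fun j => 4 * y j / (4 + ∑ i, (y i) ^ 2))
    (2 * (∑ i, (y i) ^ 2) / (4 + ∑ i, (y i) ^ 2))

lemma aux_infinite {X : Type*} {S : Set (ℕ × X)} (h : ∀ N : ℕ, ∃ x ∈ S, N < x.1) : S.Infinite := by
  refine Set.Infinite.of_image Prod.fst (Set.infinite_of_not_bddAbove ?_)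
  rintro ⟨N, hN⟩
  obtain ⟨x, hx, hlt⟩ := h N
  exact absurd (hN ⟨x, hx, rfl⟩) (Nat.not_le.2 hlt)

lemma exists_large_q {m : ℕ} {α : ℝ} (hα : 0 < α) (y : Fin m → ℝ)
    (hinf : {qp : ℕ × (Fin m → ℤ) | 0 < qp.1 ∧
      ‖(qp.1 : ℝ) • y - (fun i => (qp.2 i : ℝ))‖ ≤ (qp.1 : ℝ) ^ (-α)}.Infinite)
    (N : ℕ) : ∃ qp ∈ {qp : ℕ × (Fin m → ℤ) | 0 < qp.1 ∧
      ‖(qp.1 : ℝ) • y - (fun i => (qp.2 i : ℝ))‖ ≤ (qp.1 : ℝ) ^ (-α)}, N < qp.1 := by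
  by_contra hcon
  push_neg at hcon
  apply hinf
  set K : ℤ := ⌈(N : ℝ) * (1 + ∑ i, |y i|) + 1⌉ with hK
  apply Set.Finite.subset (Set.Finite.prod (Set.finite_Iic N)
    (Set.Finite.pi (fun _ : Fin m => Set.finite_Icc (-K) K)))
  rintro ⟨q, p⟩ ⟨hq, hnorm⟩
  have hqN : q ≤ N := hcon _ ⟨hq, hnorm⟩
  constructor
  · exact hqN
  · intro i _
    have hq1 : (1:ℝ) ≤ q := by exact_mod_cast hq
    have hη : ((q:ℝ)) ^ (-α) ≤ 1 :=
      Real.rpow_le_one_of_one_le_of_nonpos hq1 (neg_nonpos.2 hα.le)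
    have hi : |(q:ℝ) * y i - (p i : ℝ)| ≤ 1 := by
      have := norm_le_pi_norm ((q : ℝ) • y - (fun i => (p i : ℝ))) i
      simp only [Pi.sub_apply, Pi.smul_apply, smul_eq_mul, Real.norm_eq_abs] at this
      linarith [hnorm.trans hη]
    have hyB : |y i| ≤ 1 + ∑ j, |y j| := by
      have := Finset.single_le_sum (f := fun j => |y j|) (fun j _ => abs_nonneg _)
        (Finset.mem_univ i)
      linarith
    have hsum_nonneg : (0:ℝ) ≤ ∑ j, |y j| := Finset.sum_nonneg fun j _ => abs_nonneg _
    have hpb : |(p i : ℝ)| ≤ (N : ℝ) * (1 + ∑ j, |y j|) + 1 := by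
      have h1 : |(p i : ℝ)| ≤ |(q:ℝ) * y i| + 1 := by
        have h0 := abs_sub_abs_le_abs_sub ((p i : ℝ)) ((q:ℝ) * y i)
        rw [abs_sub_comm] at h0
        linarith
      have h3 : |(q:ℝ) * y i| ≤ (N:ℝ) * (1 + ∑ j, |y j|) := by
        rw [abs_mul]
        have hqN' : |(q:ℝ)| ≤ (N:ℝ) := by
          rw [abs_of_nonneg (by positivity)]; exact_mod_cast hqN
        exact mul_le_mul hqN' hyB (abs_nonneg _) (by positivity)
      linarith
    have habs : |p i| ≤ K := by
      have hr : ((|p i| : ℤ) : ℝ) ≤ (K : ℝ) := by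
        push_cast
        calc |(p i : ℝ)| ≤ (N : ℝ) * (1 + ∑ j, |y j|) + 1 := hpb
          _ ≤ (K : ℝ) := Int.le_ceil _
      exact_mod_cast hr
    exact Set.mem_Icc.2 (abs_le.1 habs)

lemma invStereo_mem_sphere (n : ℕ) (y : Fin n → ℝ) : invStereo n y ∈ TSphere n := by
  have hs : (0:ℝ) ≤ ∑ i, (y i)^2 := Finset.sum_nonneg fun i _ => sq_nonneg _
  set s := ∑ i, (y i)^2 with hsdef
  have hD : (4 + s) ≠ 0 := by positivity
  show (∑ i, (invStereo n y i - if i = Fin.last n then 1 else 0) ^ 2) = 1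
  rw [Fin.sum_univ_castSucc]
  have h1 : ∀ j : Fin n, (invStereo n y j.castSucc - if j.castSucc = Fin.last n then 1 else 0)^2
      = (16 / (4+s)^2) * (y j)^2 := by
    intro j
    rw [if_neg (Fin.castSucc_lt_last j).ne]
    simp only [invStereo, Fin.snoc_castSucc]
    rw [← hsdef]
    field_simp
    ring
  rw [Finset.sum_congr rfl (fun j _ => h1 j)]
  rw [← Finset.mul_sum, ← hsdef]
  simp only [invStereo, Fin.snoc_last, if_pos rfl, if_true, ← hsdef]
  field_simp
  ring


set_option maxHeartbeats 1000000 in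
/-- `inv` maps `S_α(ℝⁿ)` into `S_{(α−1)/2−ε}(TSⁿ)` for every `α > 0`, `ε > 0`. -/
theorem stmt_3 (n : ℕ) (α ε : ℝ) (hα : 0 < α) (hε : 0 < ε)
    (y : Fin n → ℝ) (hy : y ∈ SAlpha n α Set.univ) :
    invStereo n y ∈ SAlpha (n + 1) ((α - 1) / 2 - ε) (TSphere n) := by
  simp only [SAlpha, Set.mem_setOf_eq] at hy ⊢
  obtain ⟨-, hinf⟩ := hy
  refine ⟨invStereo_mem_sphere n y, ?_⟩
  -- constants
  have hsum_nonneg : (0:ℝ) ≤ ∑ i, |y i| := Finset.sum_nonneg fun j _ => abs_nonneg _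
  set B : ℝ := 1 + ∑ i, |y i| with hBdef
  have hB1 : (1:ℝ) ≤ B := by simp only [hBdef]; linarith
  have hB0 : (0:ℝ) < B := by linarith
  have hyB : ∀ i, |y i| ≤ B := by
    intro i
    have := Finset.single_le_sum (f := fun j => |y j|) (fun j _ => abs_nonneg _)
      (Finset.mem_univ i)
    simp only [hBdef]; linarith
  have hs0 : (0:ℝ) ≤ ∑ i, (y i)^2 := Finset.sum_nonneg fun i _ => sq_nonneg _
  set s := ∑ i, (y i)^2 with hsdef
  have hsB : s ≤ (n:ℝ) * B^2 := by
    calc s ≤ ∑ _i : Fin n, B^2 := by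
          refine Finset.sum_le_sum fun i _ => ?_
          exact sq_le_sq' (abs_le.1 (hyB i)).1 (abs_le.1 (hyB i)).2
      _ = (n:ℝ) * B^2 := by
          simp [Finset.sum_const, Finset.card_univ, nsmul_eq_mul]
  set β : ℝ := (α - 1) / 2 - ε with hβdef
  set C : ℝ := 4 + 8*(n:ℝ)*B^2 with hCdef
  have hC : 0 < C := by positivity
  set C2 : ℝ := 4 + 4*(n:ℝ)*B^2 with hC2def
  have hC2 : 0 < C2 := by positivity
  set c3 : ℝ := min (C2 ^ (-β)) ((4:ℝ) ^ (-β)) with hc3def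
  have hc3 : 0 < c3 := lt_min (Real.rpow_pos_of_pos hC2 _) (Real.rpow_pos_of_pos (by norm_num) _)
  set R : ℝ := C / c3 with hRdef
  have hR : 0 < R := div_pos hC hc3
  apply aux_infinite
  intro N
  obtain ⟨⟨q, p⟩, ⟨hq, hnorm⟩, hqlarge⟩ :=
    exists_large_q hα y hinf (max N ⌈R ^ (2*ε)⁻¹⌉₊)
  simp only at hq hnorm hqlarge
  have hqN : N < q := lt_of_le_of_lt (le_max_left _ _) hqlarge
  have hqR : R ^ (2*ε)⁻¹ ≤ (q:ℝ) :=
    Nat.ceil_le.1 ((le_max_right _ _).trans hqlarge.le)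
  set qr : ℝ := (q:ℝ) with hqrdef
  have hq0 : (0:ℝ) < qr := by rw [hqrdef]; exact_mod_cast hq
  have hq1 : (1:ℝ) ≤ qr := by rw [hqrdef]; exact_mod_cast hq
  set η : ℝ := qr ^ (-α) with hηdef
  have hη0 : 0 < η := Real.rpow_pos_of_pos hq0 _
  have hη1 : η ≤ 1 := Real.rpow_le_one_of_one_le_of_nonpos hq1 (neg_nonpos.2 hα.le)
  set d : Fin n → ℝ := fun i => qr * y i - (p i : ℝ) with hddef
  have hd : ∀ i, |d i| ≤ η := by
    intro i
    have h0 := norm_le_pi_norm ((q : ℝ) • y - (fun i => (p i : ℝ))) i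
    simp only [Pi.sub_apply, Pi.smul_apply, smul_eq_mul, Real.norm_eq_abs] at h0
    exact h0.trans hnorm
  have hpi : ∀ i, (p i : ℝ) = qr * y i - d i := fun i => by simp [hddef]
  set u : ℝ := ∑ i, y i * d i with hudef
  have hu : |u| ≤ (n:ℝ) * B * η := by
    calc |u| ≤ ∑ i, |y i * d i| := Finset.abs_sum_le_sum_abs _ _
      _ ≤ ∑ _i : Fin n, B * η := by
          refine Finset.sum_le_sum fun i _ => ?_
          rw [abs_mul]
          exact mul_le_mul (hyB i) (hd i) (abs_nonneg _) hB0.le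
      _ = (n:ℝ) * B * η := by
          simp [Finset.sum_const, Finset.card_univ, nsmul_eq_mul, mul_assoc]
  set v : ℝ := ∑ i, (d i)^2 with hvdef
  have hv0 : 0 ≤ v := Finset.sum_nonneg fun i _ => sq_nonneg _
  have hv : v ≤ (n:ℝ) * η := by
    calc v ≤ ∑ _i : Fin n, η := by
          refine Finset.sum_le_sum fun i _ => ?_
          calc (d i)^2 ≤ η^2 := sq_le_sq' (abs_le.1 (hd i)).1 (abs_le.1 (hd i)).2
            _ = η*η := sq η
            _ ≤ η*1 := mul_le_mul_of_nonneg_left hη1 hη0.le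
            _ = η := mul_one η
      _ = (n:ℝ) * η := by simp [Finset.sum_const, Finset.card_univ, nsmul_eq_mul]
  set t : ℝ := ∑ i, ((p i : ℝ))^2 with htdef
  have ht0 : 0 ≤ t := Finset.sum_nonneg fun i _ => sq_nonneg _
  have ht : t = qr^2*s - 2*qr*u + v := by
    have h1 : ∀ i, ((p i:ℝ))^2 = qr^2*(y i)^2 - 2*qr*(y i * d i) + (d i)^2 := fun i => by
      rw [hpi i]; ring
    calc t = ∑ i, (qr^2*(y i)^2 - 2*qr*(y i*d i) + (d i)^2) :=
          Finset.sum_congr rfl fun i _ => h1 i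
      _ = qr^2*s - 2*qr*u + v := by
          rw [Finset.sum_add_distrib, Finset.sum_sub_distrib, ← Finset.mul_sum, ← Finset.mul_sum,
            hsdef, hudef, hvdef]
  have htb : t ≤ 4*(n:ℝ)*B^2*qr^2 := by
    calc t ≤ ∑ _i : Fin n, 4*B^2*qr^2 := by
          refine Finset.sum_le_sum fun i _ => ?_
          have h1 : |(p i:ℝ)| ≤ 2*B*qr := by
            rw [hpi i]
            have h2 := abs_sub (qr * y i) (d i)
            have h3 : |qr * y i| ≤ qr * B := by
              rw [abs_mul, abs_of_nonneg hq0.le]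
              exact mul_le_mul_of_nonneg_left (hyB i) hq0.le
            have h4 := hd i
            have h5 : (1:ℝ) ≤ qr * B := by
              calc (1:ℝ) = 1*1 := by norm_num
                _ ≤ qr*B := mul_le_mul hq1 hB1 (by norm_num) (by positivity)
            calc |qr * y i - d i| ≤ |qr * y i| + |d i| := abs_sub _ _
              _ ≤ qr * B + 1 := by linarith
              _ ≤ 2*B*qr := by linarith
          calc ((p i:ℝ))^2 = |(p i:ℝ)|^2 := (sq_abs _).symm
            _ ≤ (2*B*qr)^2 := by
                have := pow_le_pow_left₀ (abs_nonneg ((p i:ℝ))) h1 2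
                simpa using this
            _ = 4*B^2*qr^2 := by ring
      _ = 4*(n:ℝ)*B^2*qr^2 := by
          simp [Finset.sum_const, Finset.card_univ, nsmul_eq_mul]; ring
  set D : ℝ := 4 + s with hDdef
  have hD4 : (4:ℝ) ≤ D := by simp only [hDdef]; linarith
  have hD0 : (0:ℝ) < D := by linarith
  -- Q and P
  set Q : ℕ := 4*q^2 + ∑ i, (p i).natAbs^2 with hQdef
  have hQpos : 0 < Q := by positivity
  have hQcast : (Q:ℝ) = 4*qr^2 + t := by
    simp only [hQdef, htdef, hqrdef]
    push_cast [Nat.cast_natAbs, sq_abs]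
    ring
  have hQ4 : 4*qr^2 ≤ (Q:ℝ) := by rw [hQcast]; linarith
  have hQub : (Q:ℝ) ≤ C2*qr^2 := by rw [hQcast, hC2def]; linarith [htb]
  have hQ0 : (0:ℝ) < (Q:ℝ) := by exact_mod_cast hQpos
  set P : Fin (n+1) → ℤ := Fin.snoc (fun j => 4*(q:ℤ)*(p j)) (2 * ∑ i, (p i)^2) with hPdef
  -- the key scalar bound
  have hQβ : c3 * qr^(1-α+2*ε) ≤ (Q:ℝ)^(-β) := by
    rcases le_or_gt 0 β with hβ | hβ
    · have h1 : (C2*qr^2)^(-β) ≤ (Q:ℝ)^(-β) :=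
        Real.rpow_le_rpow_of_nonpos hQ0 hQub (neg_nonpos.2 hβ)
      have h2 : (C2*qr^2)^(-β) = C2^(-β) * qr^(1-α+2*ε) := by
        rw [Real.mul_rpow hC2.le (by positivity)]
        congr 1
        rw [← Real.rpow_natCast qr 2, ← Real.rpow_mul hq0.le]
        congr 1
        push_cast [hβdef]
        ring
      calc c3 * qr^(1-α+2*ε) ≤ C2^(-β) * qr^(1-α+2*ε) :=
            mul_le_mul_of_nonneg_right (min_le_left _ _) (Real.rpow_nonneg hq0.le _)
        _ = (C2*qr^2)^(-β) := h2.symm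
        _ ≤ (Q:ℝ)^(-β) := h1
    · have h1 : (4*qr^2)^(-β) ≤ (Q:ℝ)^(-β) :=
        Real.rpow_le_rpow (by positivity) hQ4 (by linarith)
      have h2 : (4*qr^2:ℝ)^(-β) = (4:ℝ)^(-β) * qr^(1-α+2*ε) := by
        rw [Real.mul_rpow (by norm_num) (by positivity)]
        congr 1
        rw [← Real.rpow_natCast qr 2, ← Real.rpow_mul hq0.le]
        congr 1
        push_cast [hβdef]
        ring
      calc c3 * qr^(1-α+2*ε) ≤ (4:ℝ)^(-β) * qr^(1-α+2*ε) :=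
            mul_le_mul_of_nonneg_right (min_le_right _ _) (Real.rpow_nonneg hq0.le _)
        _ = (4*qr^2:ℝ)^(-β) := h2.symm
        _ ≤ (Q:ℝ)^(-β) := h1
  have hfinal : C * qr * η ≤ (Q:ℝ)^(-β) := by
    have hrw : qr^(1-α+2*ε) = qr * η * qr^(2*ε) := by
      rw [show (1-α+2*ε) = 1 + (-α) + 2*ε by ring, Real.rpow_add hq0, Real.rpow_add hq0,
        Real.rpow_one, hηdef]
    have hqε : R ≤ qr^(2*ε) := by
      have h5 := Real.rpow_le_rpow (Real.rpow_nonneg hR.le _) hqR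
        (by positivity : (0:ℝ) ≤ 2*ε)
      rwa [← Real.rpow_mul hR.le, inv_mul_cancel₀ (by positivity : (2*ε) ≠ 0),
        Real.rpow_one] at h5
    have h6 : C ≤ c3 * qr^(2*ε) := by
      have h7 : c3 * R = C := by rw [hRdef]; field_simp [hc3.ne']
      calc C = c3 * R := h7.symm
        _ ≤ c3 * qr^(2*ε) := mul_le_mul_of_nonneg_left hqε hc3.le
    calc C * qr * η = C * (qr * η) := by ring
      _ ≤ (c3 * qr^(2*ε)) * (qr * η) :=
          mul_le_mul_of_nonneg_right h6 (by positivity)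
      _ = c3 * qr^(1-α+2*ε) := by rw [hrw]; ring
      _ ≤ (Q:ℝ)^(-β) := hQβ
  refine ⟨(Q, P), ⟨hQpos, ?_⟩, ?_⟩
  · -- norm bound
    show ‖(Q:ℝ) • invStereo n y - (fun i => (P i : ℝ))‖ ≤ (Q:ℝ) ^ (-((α-1)/2 - ε))
    rw [show -((α-1)/2 - ε) = -β by rw [hβdef]]
    rw [pi_norm_le_iff_of_nonneg (Real.rpow_nonneg hQ0.le _)]
    intro i
    induction i using Fin.lastCases with
    | last =>
        simp only [Pi.sub_apply, Pi.smul_apply, smul_eq_mul, Real.norm_eq_abs,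
          invStereo, hPdef, Fin.snoc_last]
        rw [← hsdef, ← hDdef]
        have hcast : ((2 * ∑ i, (p i)^2 : ℤ) : ℝ) = 2 * t := by
          rw [htdef]; push_cast; ring
        rw [hcast]
        have hident : (Q:ℝ) * (2*s/D) - 2*t = (8/D) * (2*qr*u - v) := by
          rw [hQcast, ht, hDdef]
          field_simp
          ring
        have hE : |2*qr*u - v| ≤ 2*qr*((n:ℝ)*B*η) + (n:ℝ)*η := by
          have h1 : |2*qr*u| ≤ 2*qr*((n:ℝ)*B*η) := by
            rw [abs_mul, abs_of_nonneg (by positivity : (0:ℝ) ≤ 2*qr)]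
            exact mul_le_mul_of_nonneg_left hu (by positivity)
          have h2 : |v| ≤ (n:ℝ)*η := by rw [abs_of_nonneg hv0]; exact hv
          calc |2*qr*u - v| ≤ |2*qr*u| + |v| := abs_sub _ _
            _ ≤ 2*qr*((n:ℝ)*B*η) + (n:ℝ)*η := add_le_add h1 h2
        have hfrac : (8:ℝ)/D ≤ 2 := by
          rw [div_le_iff₀ hD0]; linarith
        calc |(Q:ℝ) * (2*s/D) - 2*t| = (8/D) * |2*qr*u - v| := by
              rw [hident, abs_mul, abs_of_nonneg (by positivity : (0:ℝ) ≤ 8/D)]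
          _ ≤ 2 * (2*qr*((n:ℝ)*B*η) + (n:ℝ)*η) :=
              mul_le_mul hfrac hE (abs_nonneg _) (by norm_num : (0:ℝ) ≤ 2)
          _ ≤ C * qr * η := by
              rw [hCdef]
              have hBsq : B ≤ B^2 := by
                calc B = B*1 := (mul_one B).symm
                  _ ≤ B*B := mul_le_mul_of_nonneg_left hB1 hB0.le
                  _ = B^2 := (sq B).symm
              have hb1 : (n:ℝ)*B*qr*η ≤ (n:ℝ)*B^2*qr*η := by
                have hBB : B ≤ B^2 := hBsq
                have := mul_le_mul_of_nonneg_right (mul_le_mul_of_nonneg_left hBB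
                  (by positivity : (0:ℝ) ≤ (n:ℝ))) (by positivity : (0:ℝ) ≤ qr*η)
                calc (n:ℝ)*B*qr*η = ((n:ℝ)*B)*(qr*η) := by ring
                  _ ≤ ((n:ℝ)*B^2)*(qr*η) := this
                  _ = (n:ℝ)*B^2*qr*η := by ring
              have hb2 : (n:ℝ)*η ≤ (n:ℝ)*B^2*qr*η := by
                have hB2 : (1:ℝ) ≤ B^2 := le_trans hB1 hBsq
                have h1B : (1:ℝ) ≤ B^2*qr := by
                  calc (1:ℝ) = 1*1 := by norm_num
                    _ ≤ B^2*qr := mul_le_mul hB2 hq1 (by norm_num) (by positivity)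
                have := mul_le_mul_of_nonneg_right h1B
                  (by positivity : (0:ℝ) ≤ (n:ℝ)*η)
                calc (n:ℝ)*η = 1*((n:ℝ)*η) := by ring
                  _ ≤ (B^2*qr)*((n:ℝ)*η) := this
                  _ = (n:ℝ)*B^2*qr*η := by ring
              have hnn : (0:ℝ) ≤ (n:ℝ)*B^2*qr*η := by positivity
              have hq0' : (0:ℝ) ≤ qr*η := by positivity
              linarith
          _ ≤ (Q:ℝ)^(-β) := hfinal
    | cast j =>
        simp only [Pi.sub_apply, Pi.smul_apply, smul_eq_mul, Real.norm_eq_abs,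
          invStereo, hPdef, Fin.snoc_castSucc]
        rw [← hsdef, ← hDdef]
        have hcast : ((4*(q:ℤ)*(p j) : ℤ) : ℝ) = 4*qr*(p j : ℝ) := by
          push_cast [hqrdef]; ring
        rw [hcast]
        have hident : (Q:ℝ) * (4*y j/D) - 4*qr*(p j : ℝ)
            = (4/D) * (4*qr*(d j) - 2*qr*u*(y j) + v*(y j) + qr*(d j)*s) := by
          rw [hQcast, ht, hpi j, hDdef]
          field_simp
          ring
        have hE : |4*qr*(d j) - 2*qr*u*(y j) + v*(y j) + qr*(d j)*s|
            ≤ 4*qr*η + 2*qr*((n:ℝ)*B*η)*B + (n:ℝ)*η*B + qr*η*((n:ℝ)*B^2) := by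
          have h1 : |4*qr*(d j)| ≤ 4*qr*η := by
            rw [abs_mul, abs_of_nonneg (by positivity : (0:ℝ) ≤ 4*qr)]
            exact mul_le_mul_of_nonneg_left (hd j) (by positivity)
          have h2 : |2*qr*u*(y j)| ≤ 2*qr*((n:ℝ)*B*η)*B := by
            rw [abs_mul, abs_mul, abs_of_nonneg (by positivity : (0:ℝ) ≤ 2*qr)]
            exact mul_le_mul (mul_le_mul_of_nonneg_left hu (by positivity)) (hyB j)
              (abs_nonneg _) (by positivity)
          have h3 : |v*(y j)| ≤ (n:ℝ)*η*B := by
            rw [abs_mul, abs_of_nonneg hv0]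
            exact mul_le_mul hv (hyB j) (abs_nonneg _) (by positivity)
          have h4 : |qr*(d j)*s| ≤ qr*η*((n:ℝ)*B^2) := by
            rw [abs_mul, abs_mul, abs_of_nonneg hq0.le, abs_of_nonneg hs0]
            exact mul_le_mul (mul_le_mul_of_nonneg_left (hd j) hq0.le) hsB hs0
              (by positivity)
          calc |4*qr*(d j) - 2*qr*u*(y j) + v*(y j) + qr*(d j)*s|
              ≤ |4*qr*(d j) - 2*qr*u*(y j) + v*(y j)| + |qr*(d j)*s| := abs_add_le _ _
            _ ≤ |4*qr*(d j) - 2*qr*u*(y j)| + |v*(y j)| + |qr*(d j)*s| := by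
                linarith [abs_add_le (4*qr*(d j) - 2*qr*u*(y j)) (v*(y j))]
            _ ≤ |4*qr*(d j)| + |2*qr*u*(y j)| + |v*(y j)| + |qr*(d j)*s| := by
                linarith [abs_sub (4*qr*(d j)) (2*qr*u*(y j))]
            _ ≤ 4*qr*η + 2*qr*((n:ℝ)*B*η)*B + (n:ℝ)*η*B + qr*η*((n:ℝ)*B^2) := by
                linarith
        have hfrac : (4:ℝ)/D ≤ 1 := by
          rw [div_le_iff₀ hD0]; linarith
        calc |(Q:ℝ) * (4*y j/D) - 4*qr*(p j:ℝ)|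
            = (4/D) * |4*qr*(d j) - 2*qr*u*(y j) + v*(y j) + qr*(d j)*s| := by
              rw [hident, abs_mul, abs_of_nonneg (by positivity : (0:ℝ) ≤ 4/D)]
          _ ≤ 1 * (4*qr*η + 2*qr*((n:ℝ)*B*η)*B + (n:ℝ)*η*B + qr*η*((n:ℝ)*B^2)) :=
              mul_le_mul hfrac hE (abs_nonneg _) (by norm_num)
          _ ≤ C * qr * η := by
              rw [hCdef, one_mul]
              have hb1 : (n:ℝ)*η*B ≤ (n:ℝ)*B^2*qr*η := by
                have hBsq : B ≤ B^2 := by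
                  calc B = B*1 := (mul_one B).symm
                    _ ≤ B*B := mul_le_mul_of_nonneg_left hB1 hB0.le
                    _ = B^2 := (sq B).symm
                have hBB : B ≤ B^2*qr := by
                  calc B ≤ B^2 := hBsq
                    _ = B^2*1 := (mul_one _).symm
                    _ ≤ B^2*qr := mul_le_mul_of_nonneg_left hq1 (by positivity)
                have := mul_le_mul_of_nonneg_left hBB
                  (by positivity : (0:ℝ) ≤ (n:ℝ)*η)
                calc (n:ℝ)*η*B = ((n:ℝ)*η)*B := by ring
                  _ ≤ ((n:ℝ)*η)*(B^2*qr) := this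
                  _ = (n:ℝ)*B^2*qr*η := by ring
              have hnn : (0:ℝ) ≤ (n:ℝ)*B^2*qr*η := by positivity
              linarith
          _ ≤ (Q:ℝ)^(-β) := hfinal
  · -- N < Q
    show N < Q
    have : q ≤ 4*q^2 := by
      calc q ≤ q*q := Nat.le_mul_of_pos_left q hq
        _ ≤ 4*(q*q) := Nat.le_mul_of_pos_left _ (by norm_num)
        _ = 4*q^2 := by ring
    omega
end

section
/- Let L : ℝ^s → ℝ be a nondegenerate quadratic form and let 𝒫_s(L) be the set of minimal positive definite quadratic forms Q with |L(x̄)| ≤ Q(x̄) for all x̄. Then Q ∈ 𝒫_s(L) if and only if there exists a basis ℬ of ℝ^s in which the matrix of Q is the identity Id_s and the matrix of L is I_{a,b} = diag(1,…,1,−1,…,−1) (a ones followed by b minus-ones), where (a,b) is the signature of L. -/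
open Matrix

/-- `𝒫_s(L)`: the set of minimal positive definite quadratic forms `Q` with
`|L(x)| ≤ Q(x)` for all `x` (forms identified with their matrices, `Q(x) = x ⬝ᵥ Q x`). -/
def PsL {s : ℕ} (L : Matrix (Fin s) (Fin s) ℝ) : Set (Matrix (Fin s) (Fin s) ℝ) :=
  {Q | Q.PosDef ∧ (∀ x : Fin s → ℝ, |x ⬝ᵥ L.mulVec x| ≤ x ⬝ᵥ Q.mulVec x) ∧
    ∀ Q' : Matrix (Fin s) (Fin s) ℝ, Q'.PosDef →
      (∀ x : Fin s → ℝ, |x ⬝ᵥ L.mulVec x| ≤ x ⬝ᵥ Q'.mulVec x) →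
      (∀ x : Fin s → ℝ, x ⬝ᵥ Q'.mulVec x ≤ x ⬝ᵥ Q.mulVec x) → Q' = Q}

/-- `I_{a,b}`: the diagonal matrix with `a` entries `1` followed by `s − a` entries `−1`. -/
def Iab (s a : ℕ) : Matrix (Fin s) (Fin s) ℝ :=
  Matrix.diagonal (fun j => if (j : ℕ) < a then 1 else -1)

/-! ### Auxiliary lemmas -/

theorem quad_congr {s : ℕ} (P M : Matrix (Fin s) (Fin s) ℝ) (x : Fin s → ℝ) :
    x ⬝ᵥ (Pᵀ * M * P).mulVec x = (P.mulVec x) ⬝ᵥ M.mulVec (P.mulVec x) := by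
  rw [mul_assoc, ← mulVec_mulVec, dotProduct_mulVec, vecMul_transpose, ← mulVec_mulVec]

theorem posDef_of_quad {s : ℕ} (M : Matrix (Fin s) (Fin s) ℝ) (h1 : M.IsSymm)
    (h2 : ∀ x : Fin s → ℝ, x ≠ 0 → 0 < x ⬝ᵥ M.mulVec x) : M.PosDef := by
  refine PosDef.of_dotProduct_mulVec_pos ?_ ?_
  · rwa [Matrix.IsHermitian, conjTranspose_eq_transpose_of_trivial]
  · intro x hx
    simpa using h2 x hx

theorem isSymm_of_posDef {s : ℕ} {M : Matrix (Fin s) (Fin s) ℝ} (h : M.PosDef) : M.IsSymm := by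
  have := h.1
  rwa [Matrix.IsHermitian, conjTranspose_eq_transpose_of_trivial] at this

theorem quad_single_add {s : ℕ} (M : Matrix (Fin s) (Fin s) ℝ) (i j : Fin s) (c d : ℝ) :
    (Pi.single i c + Pi.single j d) ⬝ᵥ M.mulVec (Pi.single i c + Pi.single j d)
      = c*c*M i i + c*d*M i j + d*c*M j i + d*d*M j j := by
  simp [dotProduct_add, add_dotProduct, mulVec_add, mulVec_single, dotProduct_add]
  ring_nf

theorem quad_single {s : ℕ} (M : Matrix (Fin s) (Fin s) ℝ) (i : Fin s) :
    (Pi.single i (1:ℝ)) ⬝ᵥ M.mulVec (Pi.single i (1:ℝ)) = M i i := by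
  simp [mulVec_single, dotProduct_single]

theorem psd_diag_zero {s : ℕ} (M : Matrix (Fin s) (Fin s) ℝ) (h1 : M.IsSymm)
    (h2 : ∀ x : Fin s → ℝ, 0 ≤ x ⬝ᵥ M.mulVec x) (h3 : ∀ i, M i i = 0) : M = 0 := by
  ext i j
  rcases eq_or_ne i j with rfl | hij
  · simp [h3]
  · have hsym : M j i = M i j := by
      have := congrFun (congrFun h1 j) i
      simpa [Matrix.IsSymm, transpose_apply] using this.symm
    have hp := h2 (Pi.single i (1:ℝ) + Pi.single j (1:ℝ))
    have hm := h2 (Pi.single i (1:ℝ) + Pi.single j (-1:ℝ))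
    rw [quad_single_add] at hp hm
    simp [h3, hsym] at hp hm
    have : M i j = 0 := le_antisymm (by linarith) (by linarith)
    simp [this]

theorem minimal_id {s a : ℕ} (R : Matrix (Fin s) (Fin s) ℝ) (hR : R.IsSymm)
    (h1 : ∀ x : Fin s → ℝ, |x ⬝ᵥ (Iab s a).mulVec x| ≤ x ⬝ᵥ R.mulVec x)
    (h2 : ∀ x : Fin s → ℝ, x ⬝ᵥ R.mulVec x ≤ x ⬝ᵥ (1 : Matrix (Fin s) (Fin s) ℝ).mulVec x) :
    R = 1 := by
  have hdiag : ∀ i, R i i = 1 := by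
    intro i
    have hA := h1 (Pi.single i (1:ℝ))
    have hB := h2 (Pi.single i (1:ℝ))
    rw [quad_single] at hA hB
    rw [quad_single] at hA
    rw [quad_single] at hB
    have : |Iab s a i i| = 1 := by
      simp [Iab, Matrix.diagonal_apply_eq]
      split <;> simp
    rw [this] at hA
    simp [Matrix.one_apply_eq] at hB
    linarith
  have key : (1 : Matrix (Fin s) (Fin s) ℝ) - R = 0 := by
    apply psd_diag_zero
    · unfold Matrix.IsSymm
      rw [transpose_sub, transpose_one, hR]
    · intro x
      have := h2 x
      simp only [sub_mulVec, dotProduct_sub]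
      linarith
    · intro i
      simp [Matrix.one_apply_eq, hdiag]
  exact (sub_eq_zero.mp key).symm

theorem Iab_quad_abs_le {s a : ℕ} (y : Fin s → ℝ) :
    |y ⬝ᵥ (Iab s a).mulVec y| ≤ y ⬝ᵥ y := by
  have h1 : y ⬝ᵥ (Iab s a).mulVec y
      = ∑ i : Fin s, (if (i:ℕ) < a then 1 else -1 : ℝ) * (y i * y i) := by
    simp [Iab, dotProduct, mulVec_diagonal]
  have h2 : y ⬝ᵥ y = ∑ i : Fin s, y i * y i := rfl
  rw [h1, h2]
  refine (Finset.abs_sum_le_sum_abs _ _).trans (Finset.sum_le_sum fun i _ => ?_)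
  rw [abs_mul]
  have : |(if (i:ℕ) < a then 1 else -1 : ℝ)| = 1 := by split <;> simp
  rw [this, one_mul, abs_mul_self (y i)]

theorem dot_self_pos {s : ℕ} {y : Fin s → ℝ} (hy : y ≠ 0) : 0 < y ⬝ᵥ y := by
  have h0 : 0 ≤ y ⬝ᵥ y := by
    have : y ⬝ᵥ y = ∑ i : Fin s, y i * y i := rfl
    rw [this]; exact Finset.sum_nonneg fun i _ => mul_self_nonneg _
  rcases h0.lt_or_eq with h | h
  · exact h
  · exact absurd (dotProduct_self_eq_zero.mp h.symm) hy

theorem surj_mulVec {s : ℕ} {P : Matrix (Fin s) (Fin s) ℝ} (hP : IsUnit P) (x : Fin s → ℝ) :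
    P.mulVec (P⁻¹.mulVec x) = x := by
  rw [mulVec_mulVec, mul_nonsing_inv _ ((isUnit_iff_isUnit_det _).mp hP), one_mulVec]

/-! ### The backward direction -/

theorem backward {s a : ℕ} (L Q : Matrix (Fin s) (Fin s) ℝ)
    (P : Matrix (Fin s) (Fin s) ℝ) (hP : IsUnit P) (hQ1 : Pᵀ * Q * P = 1)
    (hL1 : Pᵀ * L * P = Iab s a) : Q ∈ PsL L := by
  have hPd : IsUnit P.det := (isUnit_iff_isUnit_det _).mp hP
  have hPtd : IsUnit Pᵀ.det := by rwa [det_transpose]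
  have cancel : ∀ M : Matrix (Fin s) (Fin s) ℝ, (Pᵀ)⁻¹ * (Pᵀ * M * P) * P⁻¹ = M := by
    intro M
    rw [show (Pᵀ)⁻¹ * (Pᵀ * M * P) = (Pᵀ)⁻¹ * (Pᵀ * M) * P from (Matrix.mul_assoc _ _ _).symm,
      Matrix.mul_nonsing_inv_cancel_right _ _ hPd, ← Matrix.mul_assoc,
      Matrix.nonsing_inv_mul _ hPtd, Matrix.one_mul]
  have hQeq : Q = (Pᵀ)⁻¹ * P⁻¹ := by
    have h := cancel Q
    rw [hQ1, Matrix.mul_one] at h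
    exact h.symm
  have hQsymm : Q.IsSymm := by
    rw [hQeq]
    unfold Matrix.IsSymm
    rw [transpose_mul, transpose_nonsing_inv, transpose_nonsing_inv, transpose_transpose]
  have key : ∀ (M N : Matrix (Fin s) (Fin s) ℝ), Pᵀ * M * P = N →
      ∀ x : Fin s → ℝ, x ⬝ᵥ M.mulVec x = (P⁻¹.mulVec x) ⬝ᵥ N.mulVec (P⁻¹.mulVec x) := by
    intro M N hMN x
    rw [← hMN, quad_congr, surj_mulVec hP]
  have hinj : ∀ x : Fin s → ℝ, x ≠ 0 → P⁻¹.mulVec x ≠ 0 := by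
    intro x hx h
    exact hx (by rw [← surj_mulVec hP x, h, mulVec_zero])
  refine ⟨posDef_of_quad Q hQsymm fun x hx => ?_, fun x => ?_, fun Q' hQ' h1 h2 => ?_⟩
  · rw [key Q 1 hQ1 x]
    simpa using dot_self_pos (hinj x hx)
  · rw [key Q 1 hQ1 x, key L (Iab s a) hL1 x]
    simpa using Iab_quad_abs_le (P⁻¹.mulVec x)
  · have hR : (Pᵀ * Q' * P).IsSymm := by
      unfold Matrix.IsSymm
      rw [transpose_mul, transpose_mul, transpose_transpose, isSymm_of_posDef hQ', mul_assoc]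
    have hfin : Pᵀ * Q' * P = 1 := by
      apply minimal_id _ hR
      · intro y
        rw [quad_congr, ← hL1, quad_congr]
        exact h1 _
      · intro y
        rw [quad_congr, ← hQ1, quad_congr]
        exact h2 _
    have := hfin.trans hQ1.symm
    calc Q' = (Pᵀ)⁻¹ * (Pᵀ * Q' * P) * P⁻¹ := (cancel Q').symm
      _ = (Pᵀ)⁻¹ * (Pᵀ * Q * P) * P⁻¹ := by rw [this]
      _ = Q := cancel Q

/-! ### Diagonalization -/

theorem exists_diag {s : ℕ} {Q L : Matrix (Fin s) (Fin s) ℝ} (hQ : Q.PosDef) (hL : L.IsSymm) :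
    ∃ P : Matrix (Fin s) (Fin s) ℝ, IsUnit P ∧ Pᵀ * Q * P = 1 ∧
      ∃ μ : Fin s → ℝ, Pᵀ * L * P = diagonal μ := by
  obtain ⟨S, hS, hSS⟩ : ∃ S : Matrix (Fin s) (Fin s) ℝ, S.PosSemidef ∧ S * S = Q := by
    open scoped MatrixOrder in
    exact ⟨CFC.sqrt Q, (CFC.sqrt_nonneg Q).posSemidef,
      CFC.sqrt_mul_sqrt_self Q hQ.posSemidef.nonneg⟩
  have hSsym : Sᵀ = S := by
    have := hS.1
    rwa [Matrix.IsHermitian, conjTranspose_eq_transpose_of_trivial] at this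
  have hSdet : IsUnit S.det := by
    have : S.det * S.det = Q.det := by rw [← det_mul, hSS]
    have hQd : Q.det ≠ 0 := ne_of_gt hQ.det_pos
    exact isUnit_iff_ne_zero.mpr (fun h => hQd (by rw [← this, h, zero_mul]))
  set P₁ := S⁻¹ with hP₁def
  have hP₁t : P₁ᵀ = P₁ := by rw [hP₁def, transpose_nonsing_inv, hSsym]
  have hP₁Q : P₁ᵀ * Q * P₁ = 1 := by
    rw [hP₁t, hP₁def, ← hSS, ← Matrix.mul_assoc S⁻¹ S S, Matrix.nonsing_inv_mul _ hSdet,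
      Matrix.one_mul, Matrix.mul_nonsing_inv _ hSdet]
  set M := P₁ᵀ * L * P₁ with hMdef
  have hMsym : M.IsHermitian := by
    rw [Matrix.IsHermitian, conjTranspose_eq_transpose_of_trivial, hMdef,
      transpose_mul, transpose_mul, transpose_transpose, hL, Matrix.mul_assoc]
  set O : Matrix (Fin s) (Fin s) ℝ :=
    (Matrix.IsHermitian.eigenvectorUnitary hMsym : Matrix (Fin s) (Fin s) ℝ) with hOdef
  have hOmem := (Matrix.IsHermitian.eigenvectorUnitary hMsym).2
  have hO1 : Oᵀ * O = 1 := by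
    have := (Matrix.mem_unitaryGroup_iff').mp hOmem
    rwa [star_eq_conjTranspose, conjTranspose_eq_transpose_of_trivial] at this
  have hO2 : O * Oᵀ = 1 := by
    have := (Matrix.mem_unitaryGroup_iff).mp hOmem
    rwa [star_eq_conjTranspose, conjTranspose_eq_transpose_of_trivial] at this
  have hOunit : IsUnit O := (isUnit_iff_isUnit_det _).mpr
    (IsUnit.of_mul_eq_one _ (by rw [← det_mul, hO2, det_one]))
  have hdiagM : Oᵀ * M * O = diagonal (hMsym.eigenvalues) := by
    have hsp : M = O * diagonal hMsym.eigenvalues * Oᵀ := by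
      have := hMsym.spectral_theorem
      simpa [← hOdef, star_eq_conjTranspose, Function.comp_def] using this
    conv_lhs => rw [hsp]
    simp only [← Matrix.mul_assoc, hO1, Matrix.one_mul]
    rw [Matrix.mul_assoc, hO1, Matrix.mul_one]
  refine ⟨P₁ * O, (isUnit_iff_isUnit_det _).mpr ?_, ?_, hMsym.eigenvalues, ?_⟩
  · rw [det_mul]
    exact (isUnit_nonsing_inv_det _ hSdet).mul ((isUnit_iff_isUnit_det _).mp hOunit)
  · rw [transpose_mul]
    simp only [Matrix.mul_assoc]
    have h : Oᵀ * ((P₁ᵀ * Q * P₁) * O) = 1 := by rw [hP₁Q, Matrix.one_mul, hO1]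
    simpa [Matrix.mul_assoc] using h
  · rw [transpose_mul]
    simp only [Matrix.mul_assoc]
    have h : Oᵀ * ((P₁ᵀ * L * P₁) * O) = diagonal hMsym.eigenvalues := by
      rw [← hMdef, ← Matrix.mul_assoc, hdiagM]
    simpa [Matrix.mul_assoc] using h

/-! ### Sorting and Sylvester -/

theorem antitone_pm_one {s : ℕ} (h : Fin s → ℝ) (hanti : Antitone h)
    (hpm : ∀ i, h i = 1 ∨ h i = -1) :
    ∀ j : Fin s, h j = if (j : ℕ) < (Finset.filter (fun i => h i = 1) Finset.univ).card
      then 1 else -1 := by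
  intro j
  set S := Finset.filter (fun i => h i = 1) Finset.univ with hS
  by_cases hj : h j = 1
  · have hsub : Finset.Iic j ⊆ S := by
      intro i hi
      simp only [Finset.mem_Iic] at hi
      simp only [hS, Finset.mem_filter, Finset.mem_univ, true_and]
      have h1 : h j ≤ h i := hanti hi
      rcases hpm i with h2 | h2
      · exact h2
      · rw [hj] at h1; rw [h2] at h1; linarith
    have := Finset.card_le_card hsub
    rw [Fin.card_Iic] at this
    rw [if_pos (by omega)]
    exact hj
  · have hjm : h j = -1 := (hpm j).resolve_left hj
    have hsub : S ⊆ Finset.Iio j := by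
      intro i hi
      simp only [hS, Finset.mem_filter, Finset.mem_univ, true_and] at hi
      simp only [Finset.mem_Iio]
      by_contra hcon
      push_neg at hcon
      have := hanti hcon
      rw [hi, hjm] at this
      linarith
    have := Finset.card_le_card hsub
    rw [Fin.card_Iio] at this
    rw [if_neg (by omega)]
    exact hjm

theorem Iab_quad_eq_pos {s k : ℕ} (y : Fin s → ℝ) (hy : ∀ j : Fin s, k ≤ (j:ℕ) → y j = 0) :
    y ⬝ᵥ (Iab s k).mulVec y = y ⬝ᵥ y := by
  unfold Iab
  simp only [dotProduct, mulVec_diagonal]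
  apply Finset.sum_congr rfl
  intro j _
  by_cases h : (j:ℕ) < k
  · simp [h]
  · rw [hy j (le_of_not_gt h)]; simp

theorem Iab_quad_eq_neg {s a : ℕ} (y : Fin s → ℝ) (hy : ∀ j : Fin s, (j:ℕ) < a → y j = 0) :
    y ⬝ᵥ (Iab s a).mulVec y = -(y ⬝ᵥ y) := by
  unfold Iab
  simp only [dotProduct, mulVec_diagonal]
  rw [← Finset.sum_neg_distrib]
  apply Finset.sum_congr rfl
  intro j _
  by_cases h : (j:ℕ) < a
  · rw [hy j h]; simp
  · simp [h]

def lowSupp (s k : ℕ) : Submodule ℝ (Fin s → ℝ) where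
  carrier := {y | ∀ j : Fin s, k ≤ (j:ℕ) → y j = 0}
  add_mem' := by intro x y hx hy j hj; simp [hx j hj, hy j hj]
  zero_mem' := by intro j hj; rfl
  smul_mem' := by intro c x hx j hj; simp [hx j hj]

def highSupp (s a : ℕ) : Submodule ℝ (Fin s → ℝ) where
  carrier := {y | ∀ j : Fin s, (j:ℕ) < a → y j = 0}
  add_mem' := by intro x y hx hy j hj; simp [hx j hj, hy j hj]
  zero_mem' := by intro j hj; rfl
  smul_mem' := by intro c x hx j hj; simp [hx j hj]

theorem single_linearIndependent {s : ℕ} :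
    LinearIndependent ℝ (fun i : Fin s => Pi.single i (1:ℝ) : Fin s → Fin s → ℝ) := by
  have := (Pi.basisFun ℝ (Fin s)).linearIndependent
  rwa [show ⇑(Pi.basisFun ℝ (Fin s)) = fun i : Fin s => Pi.single i (1:ℝ) from
    funext fun i => Pi.basisFun_apply ℝ (Fin s) i] at this

theorem sylvester_le {s k a : ℕ} (hk : k ≤ s) (ha : a ≤ s)
    (L A B : Matrix (Fin s) (Fin s) ℝ) (hA : IsUnit A) (hB : IsUnit B)
    (hAL : Aᵀ * L * A = Iab s k) (hBL : Bᵀ * L * B = Iab s a) : k ≤ a := by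
  by_contra hcon
  push_neg at hcon
  set e : Fin k → Fin s := Fin.castLE hk with he
  set f : Fin (s - a) → Fin s := fun i => (⟨a + (i:ℕ), by omega⟩ : Fin s) with hf
  have hfinj : Function.Injective f := by
    intro i j hij
    rw [hf] at hij
    simp only [Fin.mk.injEq] at hij
    exact Fin.ext (by omega)
  set v : Fin k → (Fin s → ℝ) := fun i => A.mulVecLin (Pi.single (e i) (1:ℝ)) with hv
  set w : Fin (s - a) → (Fin s → ℝ) := fun i => B.mulVecLin (Pi.single (f i) (1:ℝ)) with hw
  have hvind : LinearIndependent ℝ v :=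
    (single_linearIndependent.comp e (Fin.castLE_injective hk)).map'
      A.mulVecLin (LinearMap.ker_eq_bot.mpr (mulVec_injective_iff_isUnit.mpr hA))
  have hwind : LinearIndependent ℝ w :=
    (single_linearIndependent.comp f hfinj).map'
      B.mulVecLin (LinearMap.ker_eq_bot.mpr (mulVec_injective_iff_isUnit.mpr hB))
  set V := Submodule.span ℝ (Set.range v) with hV
  set W := Submodule.span ℝ (Set.range w) with hW
  have hVr : Module.finrank ℝ V = k := by
    rw [hV, finrank_span_eq_card hvind, Fintype.card_fin]
  have hWr : Module.finrank ℝ W = s - a := by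
    rw [hW, finrank_span_eq_card hwind, Fintype.card_fin]
  have hdim : 0 < Module.finrank ℝ ↥(V ⊓ W) := by
    have hsum := Submodule.finrank_sup_add_finrank_inf_eq V W
    have hle : Module.finrank ℝ ↥(V ⊔ W) ≤ s := by
      have := Submodule.finrank_le (V ⊔ W)
      simpa using this
    rw [hVr, hWr] at hsum
    omega
  have hne : V ⊓ W ≠ ⊥ := by
    intro h
    rw [h, finrank_bot] at hdim
    exact lt_irrefl 0 hdim
  obtain ⟨x, hxVW, hx0⟩ := Submodule.exists_mem_ne_zero_of_ne_bot hne
  have hxV : x ∈ V := hxVW.1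
  have hxW : x ∈ W := hxVW.2
  have hpos : 0 < x ⬝ᵥ L.mulVec x := by
    have : V ≤ Submodule.map A.mulVecLin (lowSupp s k) := by
      rw [hV, Submodule.span_le]
      rintro _ ⟨i, rfl⟩
      refine ⟨Pi.single (e i) 1, fun j hj => Pi.single_eq_of_ne ?_ _, rfl⟩
      intro hje
      subst hje
      have hi : (i:ℕ) < k := i.isLt
      simp only [he, Fin.coe_castLE] at hj
      omega
    obtain ⟨y, hy, hxy⟩ := this hxV
    have hy0 : y ≠ 0 := by rintro rfl; exact hx0 (by rw [← hxy]; simp)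
    have : x ⬝ᵥ L.mulVec x = y ⬝ᵥ (Iab s k).mulVec y := by
      rw [← hAL, quad_congr]
      rw [show A.mulVec y = x from hxy]
    rw [this, Iab_quad_eq_pos y hy]
    exact dot_self_pos hy0
  have hneg : x ⬝ᵥ L.mulVec x ≤ 0 := by
    have : W ≤ Submodule.map B.mulVecLin (highSupp s a) := by
      rw [hW, Submodule.span_le]
      rintro _ ⟨i, rfl⟩
      refine ⟨Pi.single (f i) 1, fun j hj => Pi.single_eq_of_ne ?_ _, rfl⟩
      intro hje
      subst hje
      simp only [hf] at hj
      omega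
    obtain ⟨y, hy, hxy⟩ := this hxW
    have : x ⬝ᵥ L.mulVec x = y ⬝ᵥ (Iab s a).mulVec y := by
      rw [← hBL, quad_congr]
      rw [show B.mulVec y = x from hxy]
    rw [this, Iab_quad_eq_neg y hy]
    have : (0:ℝ) ≤ y ⬝ᵥ y := by
      by_cases h : y = 0
      · subst h; simp
      · exact le_of_lt (dot_self_pos h)
    linarith
  linarith

/-! ### Submatrix conjugation -/

theorem conj_submatrix {s : ℕ} (σ : Equiv.Perm (Fin s)) (P L : Matrix (Fin s) (Fin s) ℝ) :
    (P.submatrix id ⇑σ)ᵀ * L * (P.submatrix id ⇑σ) = (Pᵀ * L * P).submatrix ⇑σ ⇑σ := by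
  ext i j
  simp only [mul_apply, submatrix_apply, transpose_apply, id_eq]

theorem diagonal_submatrix_perm {s : ℕ} (σ : Equiv.Perm (Fin s)) (d : Fin s → ℝ) :
    (diagonal d).submatrix ⇑σ ⇑σ = diagonal (d ∘ ⇑σ) := by
  ext i j
  rcases eq_or_ne i j with rfl | hij
  · simp [diagonal_apply_eq]
  · rw [submatrix_apply, diagonal_apply_ne _ (fun h => hij (σ.injective h)),
      diagonal_apply_ne _ hij]

theorem one_submatrix_perm {s : ℕ} (σ : Equiv.Perm (Fin s)) :
    (1 : Matrix (Fin s) (Fin s) ℝ).submatrix ⇑σ ⇑σ = 1 := by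
  have := diagonal_submatrix_perm σ (fun _ => (1:ℝ))
  simpa [Matrix.diagonal_one] using this

theorem quad_inv {s : ℕ} {P : Matrix (Fin s) (Fin s) ℝ} (hP : IsUnit P)
    (M N : Matrix (Fin s) (Fin s) ℝ) (h : Pᵀ * M * P = N) (x : Fin s → ℝ) :
    x ⬝ᵥ M.mulVec x = (P⁻¹.mulVec x) ⬝ᵥ N.mulVec (P⁻¹.mulVec x) := by
  rw [← h, quad_congr, surj_mulVec hP]

theorem quad_diagonal {s : ℕ} (d : Fin s → ℝ) (y : Fin s → ℝ) :
    y ⬝ᵥ (diagonal d).mulVec y = ∑ i : Fin s, d i * (y i * y i) := by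
  simp only [dotProduct, mulVec_diagonal]
  exact Finset.sum_congr rfl fun i _ => by ring

theorem cancel2 {s : ℕ} {P : Matrix (Fin s) (Fin s) ℝ} (hPd : IsUnit P.det)
    (hPtd : IsUnit Pᵀ.det) (D : Matrix (Fin s) (Fin s) ℝ) :
    Pᵀ * ((Pᵀ)⁻¹ * D * P⁻¹) * P = D := by
  simp only [Matrix.mul_assoc]
  rw [Matrix.nonsing_inv_mul _ hPd, Matrix.mul_one, Matrix.mul_nonsing_inv_cancel_left _ _ hPtd]

/-- `Q ∈ 𝒫_s(L)` iff there is a basis (encoded by an invertible change-of-basis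
matrix `P`) in which the matrix of `Q` is `Id_s` and the matrix of `L` is `I_{a,b}`, where
`(a,b)` is the signature of the nondegenerate form `L`. -/
theorem stmt_7 (s a b : ℕ) (hab : a + b = s)
    (L : Matrix (Fin s) (Fin s) ℝ) (hL : L.IsSymm) (hLdet : L.det ≠ 0)
    (hsig : ∃ P : Matrix (Fin s) (Fin s) ℝ, IsUnit P ∧ Pᵀ * L * P = Iab s a)
    (Q : Matrix (Fin s) (Fin s) ℝ) :
    Q ∈ PsL L ↔
      ∃ P : Matrix (Fin s) (Fin s) ℝ, IsUnit P ∧ Pᵀ * Q * P = 1 ∧ Pᵀ * L * P = Iab s a := by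
  constructor
  · rintro ⟨hQpd, hineq, hmin⟩
    obtain ⟨B, hBunit, hBL⟩ := hsig
    obtain ⟨P, hPu, hPQ, μ, hPL⟩ := exists_diag hQpd hL
    have hPd : IsUnit P.det := (isUnit_iff_isUnit_det _).mp hPu
    have hPtd : IsUnit Pᵀ.det := by rwa [det_transpose]
    -- transported inequality
    have htrans : ∀ y : Fin s → ℝ, |y ⬝ᵥ (diagonal μ).mulVec y| ≤ y ⬝ᵥ y := by
      intro y
      have h0 := hineq (P.mulVec y)
      have hl : (P.mulVec y) ⬝ᵥ L.mulVec (P.mulVec y) = y ⬝ᵥ (diagonal μ).mulVec y := by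
        rw [← quad_congr, hPL]
      have hq : (P.mulVec y) ⬝ᵥ Q.mulVec (P.mulVec y) = y ⬝ᵥ y := by
        rw [← quad_congr, hPQ, one_mulVec]
      rw [hl, hq] at h0
      exact h0
    have habs : ∀ i, |μ i| ≤ 1 := by
      intro i
      have := htrans (Pi.single i (1:ℝ))
      rw [quad_single] at this
      rw [diagonal_apply_eq] at this
      have h1 : (Pi.single i (1:ℝ)) ⬝ᵥ (Pi.single i (1:ℝ)) = 1 := by
        simp [dotProduct_single]
      rw [h1] at this
      exact this
    -- eigenvalues nonzero
    have hμne : ∀ i, μ i ≠ 0 := by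
      have hdetd : (diagonal μ).det ≠ 0 := by
        rw [← hPL, det_mul, det_mul, det_transpose]
        exact mul_ne_zero (mul_ne_zero hPd.ne_zero hLdet) hPd.ne_zero
      rw [det_diagonal] at hdetd
      intro i hi
      exact hdetd (Finset.prod_eq_zero (Finset.mem_univ i) hi)
    -- comparison matrix Q'
    set D' : Matrix (Fin s) (Fin s) ℝ := diagonal (fun i => |μ i|) with hD'
    set Q' : Matrix (Fin s) (Fin s) ℝ := (Pᵀ)⁻¹ * D' * P⁻¹ with hQ'
    have hPQ' : Pᵀ * Q' * P = D' := by rw [hQ']; exact cancel2 hPd hPtd D'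
    have hQ'sym : Q'.IsSymm := by
      rw [hQ']
      unfold Matrix.IsSymm
      rw [transpose_mul, transpose_mul, transpose_nonsing_inv, transpose_nonsing_inv,
        transpose_transpose, diagonal_transpose, Matrix.mul_assoc]
    have hQ'quad : ∀ x : Fin s → ℝ, x ⬝ᵥ Q'.mulVec x
        = ∑ i : Fin s, |μ i| * ((P⁻¹.mulVec x) i * (P⁻¹.mulVec x) i) := by
      intro x
      rw [quad_inv hPu Q' D' hPQ' x, hD', quad_diagonal]
    have hQquad : ∀ x : Fin s → ℝ, x ⬝ᵥ Q.mulVec x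
        = ∑ i : Fin s, (P⁻¹.mulVec x) i * (P⁻¹.mulVec x) i := by
      intro x
      rw [quad_inv hPu Q 1 hPQ x, one_mulVec, dotProduct]
    have hLquad : ∀ x : Fin s → ℝ, x ⬝ᵥ L.mulVec x
        = ∑ i : Fin s, μ i * ((P⁻¹.mulVec x) i * (P⁻¹.mulVec x) i) := by
      intro x
      rw [quad_inv hPu L (diagonal μ) hPL x, quad_diagonal]
    have hinvne : ∀ x : Fin s → ℝ, x ≠ 0 → P⁻¹.mulVec x ≠ 0 := by
      intro x hx h
      exact hx (by rw [← surj_mulVec hPu x, h, mulVec_zero])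
    have hQ'pd : Q'.PosDef := by
      apply posDef_of_quad Q' hQ'sym
      intro x hx
      rw [hQ'quad]
      obtain ⟨i, hi⟩ := Function.ne_iff.mp (hinvne x hx)
      have hi' : (P⁻¹.mulVec x) i ≠ 0 := by simpa using hi
      exact Finset.sum_pos' (fun j _ => mul_nonneg (abs_nonneg _) (mul_self_nonneg _))
        ⟨i, Finset.mem_univ i, mul_pos (abs_pos.mpr (hμne i)) (mul_self_pos.mpr hi')⟩
    have h1' : ∀ x : Fin s → ℝ, |x ⬝ᵥ L.mulVec x| ≤ x ⬝ᵥ Q'.mulVec x := by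
      intro x
      rw [hLquad, hQ'quad]
      refine (Finset.abs_sum_le_sum_abs _ _).trans (Finset.sum_le_sum fun i _ => ?_)
      rw [abs_mul, abs_mul_self]
    have h2' : ∀ x : Fin s → ℝ, x ⬝ᵥ Q'.mulVec x ≤ x ⬝ᵥ Q.mulVec x := by
      intro x
      rw [hQ'quad, hQquad]
      refine Finset.sum_le_sum fun i _ => ?_
      have h := habs i
      nlinarith [mul_self_nonneg ((P⁻¹.mulVec x) i)]
    have hQ'eq : Q' = Q := hmin Q' hQ'pd h1' h2'
    have hD'1 : D' = 1 := by rw [← hPQ', hQ'eq, hPQ]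
    have habs1 : ∀ i, |μ i| = 1 := by
      intro i
      have h := congrFun (congrFun hD'1 i) i
      simpa [hD', diagonal_apply_eq, Matrix.one_apply_eq] using h
    have hpm : ∀ i, μ i = 1 ∨ μ i = -1 := fun i =>
      (abs_eq (by norm_num : (0:ℝ) ≤ 1)).mp (habs1 i)
    -- sorting
    set g : Fin s → ℝ := fun i => -μ i with hg
    set σ := Tuple.sort g with hσ
    have hmono := Tuple.monotone_sort g
    have hanti : Antitone (μ ∘ ⇑σ) := by
      intro i j hij
      have h := hmono hij
      simp only [Function.comp_apply, hg] at h ⊢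
      linarith
    set k := (Finset.filter (fun i => (μ ∘ ⇑σ) i = 1) Finset.univ).card with hkdef
    have hks : k ≤ s := by
      calc k ≤ Finset.univ.card := Finset.card_filter_le _ _
        _ = s := by simp
    have hform := antitone_pm_one (μ ∘ ⇑σ) hanti (fun i => hpm (σ i))
    have hIab : diagonal (μ ∘ ⇑σ) = Iab s k := by
      have h := congrArg (Matrix.diagonal : (Fin s → ℝ) → Matrix (Fin s) (Fin s) ℝ) (funext hform)
      rw [h]
      rfl
    set P' := P.submatrix id ⇑σ with hP'
    have hP'L : P'ᵀ * L * P' = Iab s k := by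
      rw [hP', conj_submatrix, hPL, diagonal_submatrix_perm, hIab]
    have hP'Q : P'ᵀ * Q * P' = 1 := by
      rw [hP', conj_submatrix, hPQ, one_submatrix_perm]
    have hP'u : IsUnit P' := by
      rw [hP', isUnit_iff_isUnit_det, det_permute']
      have hsg : ((Equiv.Perm.sign σ : ℤ) : ℝ) ≠ 0 := by
        rcases Int.units_eq_one_or (Equiv.Perm.sign σ) with h | h <;> simp [h]
      exact isUnit_iff_ne_zero.mpr (mul_ne_zero hsg hPd.ne_zero)
    have has : a ≤ s := by omega
    have hka : k = a := le_antisymm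
      (sylvester_le hks has L P' B hP'u hBunit hP'L hBL)
      (sylvester_le has hks L B P' hBunit hP'u hBL hP'L)
    exact ⟨P', hP'u, hP'Q, by rw [hP'L, hka]⟩
  · rintro ⟨P, hPu, h1, h2⟩
    exact backward L Q P hPu h1 h2
end

section
/- Let n ∈ ℕ. For any nonincreasing g : ℝ → [0,∞) and any η > 0, c > 0, if Σ_{k=1}^∞ k^n g(2η ln k) = ∞, then Σ_{k=1}^∞ k^n g(2η ln k + c) = ∞. -/
/-- for any nonincreasing nonnegative function `g : ℝ → ℝ` and any `η, c > 0`,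
if `Σ_{k≥1} k^n · g(2η ln k)` diverges then so does `Σ_{k≥1} k^n · g(2η ln k + c)`. -/
theorem stmt_18 (n : ℕ) (g : ℝ → ℝ) (hg0 : ∀ x, 0 ≤ g x) (hganti : Antitone g)
    (η c : ℝ) (hη : 0 < η) (hc : 0 < c)
    (hdiv : ¬ Summable (fun k : ℕ => (k : ℝ) ^ n * g (2 * η * Real.log k))) :
    ¬ Summable (fun k : ℕ => (k : ℝ) ^ n * g (2 * η * Real.log k + c)) := by
  intro hsum
  apply hdiv
  set f : ℕ → ℝ := fun k => (k : ℝ) ^ n * g (2 * η * Real.log k + c) with hf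
  have hfnn : ∀ k : ℕ, 0 ≤ f k := fun k =>
    mul_nonneg (pow_nonneg (Nat.cast_nonneg k) n) (hg0 _)
  set M : ℕ := ⌈Real.exp (c / (2 * η))⌉₊ with hMdef
  have hMe : Real.exp (c / (2 * η)) ≤ (M : ℝ) := Nat.le_ceil _
  have hM1 : 1 ≤ M := Nat.one_le_ceil_iff.2 (Real.exp_pos _)
  haveI : NeZero M := ⟨by omega⟩
  have hMpos : (0 : ℝ) < M := by exact_mod_cast (by omega : 0 < M)
  -- c ≤ 2η log M
  have hlogM : c ≤ 2 * η * Real.log M := by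
    have h1 : c / (2 * η) ≤ Real.log M := (Real.le_log_iff_exp_le hMpos).2 hMe
    have h2η : (0 : ℝ) < 2 * η := by linarith
    calc c = 2 * η * (c / (2 * η)) := by field_simp
    _ ≤ 2 * η * Real.log M := by nlinarith [h1]
  -- summability of m ↦ f (m / M)
  have hFin : Summable (fun p : ℕ × Fin M => f p.1) := by
    rw [summable_prod_of_nonneg (fun p => hfnn p.1)]
    refine ⟨fun k => summable_of_finite_support (Set.toFinite _), ?_⟩
    have : (fun k : ℕ => ∑' _ : Fin M, f k) = fun k => (M : ℝ) * f k := by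
      funext k
      simp [tsum_fintype]
    rw [this]
    exact hsum.mul_left _
  have hdm : Summable (fun m : ℕ => f (m / M)) := by
    have := (Nat.divModEquiv M).summable_iff.2 hFin
    exact this
  -- comparison for m ≥ M, then shift
  rw [← summable_nat_add_iff M]
  have hmaj : Summable (fun m : ℕ => ((2 * M : ℝ)) ^ n * f ((m + M) / M)) :=
    (((summable_nat_add_iff M).2 hdm)).mul_left _
  refine Summable.of_nonneg_of_le (fun m => mul_nonneg (pow_nonneg (Nat.cast_nonneg _) n) (hg0 _))
    (fun j => ?_) hmaj
  set m : ℕ := j + M with hm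
  set k : ℕ := m / M with hk
  have hk1 : 1 ≤ k := Nat.one_le_div_iff (by omega) |>.2 (by omega)
  have hmk : M * k ≤ m := by rw [hk, mul_comm]; exact Nat.div_mul_le_self m M
  have hmlt : m < M * k + M := by
    rw [hk]
    have h1 := Nat.div_add_mod m M
    have h2 := Nat.mod_lt m (show 0 < M by omega)
    omega
  have hmle : m ≤ 2 * M * k := by nlinarith
  have hkpos : (0 : ℝ) < k := by exact_mod_cast (by omega : 0 < k)
  have hmpos : (0 : ℝ) < m := by exact_mod_cast (by omega : 0 < m)
  -- log inequality
  have hlog : 2 * η * Real.log k + c ≤ 2 * η * Real.log m := by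
    have h1 : Real.log (M * k) ≤ Real.log m := by
      apply Real.log_le_log (by positivity)
      exact_mod_cast hmk
    have h2 : Real.log ((M : ℝ) * k) = Real.log M + Real.log k :=
      Real.log_mul (ne_of_gt hMpos) (ne_of_gt hkpos)
    have h2η : (0 : ℝ) ≤ 2 * η := by linarith
    have : Real.log M + Real.log k ≤ Real.log m := by
      rw [← h2]; exact_mod_cast h1
    nlinarith [hlogM]
  have hgle : g (2 * η * Real.log m) ≤ g (2 * η * Real.log k + c) := hganti hlog
  have hpow : (m : ℝ) ^ n ≤ (2 * M : ℝ) ^ n * (k : ℝ) ^ n := by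
    rw [← mul_pow]
    apply pow_le_pow_left₀ (le_of_lt hmpos)
    exact_mod_cast hmle
  calc (m : ℝ) ^ n * g (2 * η * Real.log m)
      ≤ ((2 * M : ℝ) ^ n * (k : ℝ) ^ n) * g (2 * η * Real.log k + c) :=
        mul_le_mul hpow hgle (hg0 _) (by positivity)
    _ = (2 * M : ℝ) ^ n * f k := by rw [hf]; ring
end
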